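/- Theorem 3 (the representation kills the alternating window sums): suppose n ≥ N + 2 and fix k with 1 ≤ k ≤ n − N − 1. Then ∑_{w} sgn(w)·P_w = 0, where the sum ranges over all permutations w of {1,…,n} that fix every point outside the window {k, k+1, …, k+N+1}, P_w = M_{i_1}⋯M_{i_ℓ} for any reduced word (i_1,…,i_ℓ) of w, and sgn(w) = ±1 is the sign of w viewed in F. -/

import Mathlib

open Matrix

/-- The tuple `u` with the entries in positions `i` and `i+1` interchanged
(0-indexed; returns `u` unchanged if `i+1` is out of range). -/
def swapTup (n N : ℕ) (i : ℕ) (u : Fin n → Fin (N + 1)) : Fin n → Fin (N + 1) :=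
  if h : i + 1 < n then u ∘ Equiv.swap ⟨i, Nat.lt_of_succ_lt h⟩ ⟨i + 1, h⟩ else u

/-- Jones's bowling-ball matrix `M_i` (0-indexed: `i` ranges over `0,…,n-2`,
corresponding to the lanes `i+1` and `i+2` in 1-indexed notation; it is the
identity matrix out of range).  Rows and columns are indexed by the tuples
`u : Fin n → Fin (N+1)` recording the number of balls in each lane:
`M_i e_u = e_{s_i u}` if `u i ≤ u (i+1)`, and
`M_i e_u = q • e_{s_i u} + (1-q) • e_u` if `u i > u (i+1)`. -/
def bowlM (F : Type*) [Field F] (q : F) (n N : ℕ) (i : ℕ) :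
    Matrix (Fin n → Fin (N + 1)) (Fin n → Fin (N + 1)) F :=
  if h : i + 1 < n then
    Matrix.of fun v u =>
      if u ⟨i, Nat.lt_of_succ_lt h⟩ ≤ u ⟨i + 1, h⟩ then
        (if v = swapTup n N i u then 1 else 0)
      else
        q * (if v = swapTup n N i u then 1 else 0) + (1 - q) * (if v = u then 1 else 0)
  else 1
/-- The adjacent transposition `s_i = (i, i+1)` of `Fin n`
(0-indexed; the identity permutation out of range). -/
def adjSwap (n : ℕ) (i : ℕ) : Equiv.Perm (Fin n) :=
  if h : i + 1 < n then Equiv.swap ⟨i, Nat.lt_of_succ_lt h⟩ ⟨i + 1, h⟩ else 1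

/-- The number of inversions of a permutation `w` of `Fin n`:
the number of pairs `i < j` with `w j < w i`. -/
def inversions (n : ℕ) (w : Equiv.Perm (Fin n)) : ℕ :=
  (Finset.univ.filter fun p : Fin n × Fin n => p.1 < p.2 ∧ w p.2 < w p.1).card

/-- A list `l` of indices (0-indexed, each in `{0, …, n-2}`) is a reduced word
for the permutation `w` if `w` is the composite of the corresponding adjacent
transpositions and the length of `l` equals the number of inversions of `w`. -/
def IsReducedWord (n : ℕ) (w : Equiv.Perm (Fin n)) (l : List ℕ) : Prop :=
  (∀ i ∈ l, i + 1 < n) ∧ (l.map (adjSwap n)).prod = w ∧ l.length = inversions n w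

/-- The product `M_{i_1} ⋯ M_{i_ℓ}` of bowling-ball matrices along a word. -/
def prodBowlM (F : Type*) [Field F] (q : F) (n N : ℕ) (l : List ℕ) :
    Matrix (Fin n → Fin (N + 1)) (Fin n → Fin (N + 1)) F :=
  (l.map (bowlM F q n N)).prod

/-!
Write `A = ∑_{w ∈ W} sgn(w) P_w`, where `W` is the group of permutations of the window. For a
window index `i`, pairing `w` with `w s_i` and using `P_{w s_i} = P_w M_i` whenever
`w(i) < w(i+1)` gives `A = B (1 - M_i)`. The quadratic relation `M_i² = (1 - q) M_i + q` turns
this into `A M_i = -q A`, while `(1 - M_i) e_u = 0` when `u_i = u_{i+1}`. Every column `A e_u`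
then vanishes by induction on the inversions of `u`: a window descent at `i` writes
`e_u = M_i e_{s_i u}` with `s_i u` having fewer inversions, and if there is none, `u` has two
equal neighbours in the window, because `N + 2` lanes carry only `N + 1` possible ball counts.
-/

open Equiv Finset

section TupleInversions

variable {n : ℕ} {α : Type*} [LinearOrder α]

def tupleInversions (f : Fin n → α) : ℕ :=
  #{p : Fin n × Fin n | p.1 < p.2 ∧ f p.2 < f p.1}

theorem swap_apply_lt_swap_apply {a b x y : Fin n} (hab : (b : ℕ) = a + 1) (hxy : x < y)
    (hne : (x, y) ≠ (a, b)) : swap a b x < swap a b y := by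
  simp only [ne_eq, Prod.mk.injEq, not_and, Fin.ext_iff] at hne
  simp only [swap_apply_def]
  split_ifs <;> simp only [Fin.lt_def, Fin.ext_iff] at * <;> omega

theorem tupleInversions_comp_swap {a b : Fin n} (hab : (b : ℕ) = a + 1) {f : Fin n → α}
    (hf : f a < f b) : tupleInversions (f ∘ swap a b) = tupleInversions f + 1 := by
  have hlt : a < b := by simp [Fin.lt_def, hab]
  have hmem : (a, b) ∈ ({p : Fin n × Fin n | p.1 < p.2 ∧ (f ∘ swap a b) p.2 < (f ∘ swap a b) p.1} :
      Finset _) := by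
    simpa using ⟨hlt, hf⟩
  rw [tupleInversions, tupleInversions, ← card_erase_add_one hmem]
  congr 1
  apply card_nbij' (Prod.map (swap a b) (swap a b)) (Prod.map (swap a b) (swap a b))
  · rintro ⟨x, y⟩ hp
    simp only [mem_coe, mem_erase, mem_filter, mem_univ, true_and, Function.comp_apply] at hp
    simpa using ⟨swap_apply_lt_swap_apply hab hp.2.1 hp.1, hp.2.2⟩
  · rintro ⟨x, y⟩ hp
    simp only [mem_coe, mem_filter, mem_univ, true_and] at hp
    have hne : (x, y) ≠ (a, b) := by rintro ⟨⟩; exact hf.not_gt hp.2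
    have hne' : (swap a b x, swap a b y) ≠ (a, b) := by
      simp only [ne_eq, Prod.mk.injEq, swap_apply_eq_iff, swap_apply_left, swap_apply_right]
      rintro ⟨rfl, rfl⟩
      exact hlt.not_gt hp.1
    simpa [hne'] using ⟨swap_apply_lt_swap_apply hab hp.1 hne, hp.2⟩
  · rintro ⟨x, y⟩ -; simp
  · rintro ⟨x, y⟩ -; simp

end TupleInversions

section AdjacentTranspositions

variable {n i : ℕ}

theorem adjSwap_of_lt (h : i + 1 < n) :
    adjSwap n i = swap ⟨i, Nat.lt_of_succ_lt h⟩ ⟨i + 1, h⟩ :=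
  dif_pos h

theorem adjSwap_mul_self : adjSwap n i * adjSwap n i = 1 := by
  unfold adjSwap; split <;> simp

theorem mul_adjSwap_mul_adjSwap (w : Perm (Fin n)) : w * adjSwap n i * adjSwap n i = w := by
  rw [mul_assoc, adjSwap_mul_self, mul_one]

theorem adjSwap_apply_of_ne {j : Fin n} (h₁ : (j : ℕ) ≠ i) (h₂ : (j : ℕ) ≠ i + 1) :
    adjSwap n i j = j := by
  unfold adjSwap; split
  · exact swap_apply_of_ne_of_ne (by simpa [Fin.ext_iff]) (by simpa [Fin.ext_iff])
  · rfl

theorem sign_adjSwap (h : i + 1 < n) : Perm.sign (adjSwap n i) = -1 := by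
  rw [adjSwap_of_lt h]
  exact Perm.sign_swap (by simp [Fin.ext_iff])

theorem mul_adjSwap_apply_left (h : i + 1 < n) (w : Perm (Fin n)) :
    (w * adjSwap n i) ⟨i, Nat.lt_of_succ_lt h⟩ = w ⟨i + 1, h⟩ := by
  simp [adjSwap_of_lt h]

theorem mul_adjSwap_apply_right (h : i + 1 < n) (w : Perm (Fin n)) :
    (w * adjSwap n i) ⟨i + 1, h⟩ = w ⟨i, Nat.lt_of_succ_lt h⟩ := by
  simp [adjSwap_of_lt h]

theorem inversions_mul_adjSwap (h : i + 1 < n) {w : Perm (Fin n)}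
    (hw : w ⟨i, Nat.lt_of_succ_lt h⟩ < w ⟨i + 1, h⟩) :
    inversions n (w * adjSwap n i) = inversions n w + 1 := by
  rw [adjSwap_of_lt h]
  exact tupleInversions_comp_swap rfl hw

theorem perm_eq_one_of_forall_lt_succ {w : Perm (Fin n)}
    (hw : ∀ i (h : i + 1 < n), w ⟨i, Nat.lt_of_succ_lt h⟩ < w ⟨i + 1, h⟩) : w = 1 := by
  obtain _ | m := n
  · exact Subsingleton.elim _ _
  have hmono : StrictMono w := Fin.strictMono_iff_lt_succ.2 fun i => hw i i.succ.isLt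
  exact Equiv.ext fun x => congrArg (· x)
    (Subsingleton.elim (hmono.orderIsoOfSurjective w w.surjective) (OrderIso.refl _))

theorem IsReducedWord.append_singleton {w : Perm (Fin n)} {l : List ℕ}
    (hl : IsReducedWord n w l) (h : i + 1 < n)
    (hw : w ⟨i, Nat.lt_of_succ_lt h⟩ < w ⟨i + 1, h⟩) :
    IsReducedWord n (w * adjSwap n i) (l ++ [i]) := by
  obtain ⟨hlt, hprod, hlen⟩ := hl
  refine ⟨?_, by simp [hprod], by simp [hlen, inversions_mul_adjSwap h hw]⟩
  simpa [or_imp, forall_and, h] using hlt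

theorem exists_isReducedWord (w : Perm (Fin n)) : ∃ l, IsReducedWord n w l := by
  induction hm : inversions n w using Nat.strong_induction_on generalizing w with
  | _ m ih =>
  by_cases hdesc : ∃ i, ∃ h : i + 1 < n, w ⟨i + 1, h⟩ < w ⟨i, Nat.lt_of_succ_lt h⟩
  · obtain ⟨i, h, hdesc⟩ := hdesc
    have hasc : (w * adjSwap n i) ⟨i, Nat.lt_of_succ_lt h⟩ < (w * adjSwap n i) ⟨i + 1, h⟩ := by
      rwa [mul_adjSwap_apply_left h, mul_adjSwap_apply_right h]
    have hinv := inversions_mul_adjSwap h hasc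
    rw [mul_adjSwap_mul_adjSwap] at hinv
    obtain ⟨l, hl⟩ := ih _ (by omega) (w * adjSwap n i) rfl
    exact ⟨_, mul_adjSwap_mul_adjSwap w ▸ hl.append_singleton h hasc⟩
  · push Not at hdesc
    have hw : w = 1 := perm_eq_one_of_forall_lt_succ fun i h =>
      (hdesc i h).lt_of_ne (w.injective.ne (by simp [Fin.ext_iff]))
    subst hw
    exact ⟨[], by simp, by simp,
      (card_eq_zero.2 <| filter_eq_empty_iff.2 fun _ _ hp => hp.1.not_gt hp.2).symm⟩

end AdjacentTranspositions

section BowlingBallMatrices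

variable {F : Type*} [Field F] {q : F} {n N i : ℕ}

theorem swapTup_of_lt (h : i + 1 < n) (u : Fin n → Fin (N + 1)) :
    swapTup n N i u = u ∘ swap ⟨i, Nat.lt_of_succ_lt h⟩ ⟨i + 1, h⟩ :=
  dif_pos h

theorem swapTup_involutive : Function.Involutive (swapTup n N i) := by
  intro u; unfold swapTup; split <;> ext <;> simp

theorem swapTup_of_eq (h : i + 1 < n) {u : Fin n → Fin (N + 1)}
    (hu : u ⟨i, Nat.lt_of_succ_lt h⟩ = u ⟨i + 1, h⟩) : swapTup n N i u = u := by
  rw [swapTup_of_lt h]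
  ext x
  simp only [Function.comp_apply, swap_apply_def]
  split_ifs <;> simp_all

theorem tupleInversions_swapTup (h : i + 1 < n) {u : Fin n → Fin (N + 1)}
    (hu : u ⟨i, Nat.lt_of_succ_lt h⟩ < u ⟨i + 1, h⟩) :
    tupleInversions (swapTup n N i u) = tupleInversions u + 1 := by
  rw [swapTup_of_lt h]
  exact tupleInversions_comp_swap rfl hu

theorem bowlM_mulVec_single_of_le (h : i + 1 < n) {u : Fin n → Fin (N + 1)}
    (hu : u ⟨i, Nat.lt_of_succ_lt h⟩ ≤ u ⟨i + 1, h⟩) :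
    bowlM F q n N i *ᵥ Pi.single u 1 = Pi.single (swapTup n N i u) 1 := by
  ext v
  simp [bowlM, h, hu, Pi.single_apply]

theorem bowlM_mulVec_single_of_lt (h : i + 1 < n) {u : Fin n → Fin (N + 1)}
    (hu : u ⟨i + 1, h⟩ < u ⟨i, Nat.lt_of_succ_lt h⟩) :
    bowlM F q n N i *ᵥ Pi.single u 1
      = q • Pi.single (swapTup n N i u) 1 + (1 - q) • Pi.single u 1 := by
  ext v
  simp [bowlM, h, hu.not_ge, Pi.single_apply]

theorem bowlM_mul_self (h : i + 1 < n) :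
    bowlM F q n N i * bowlM F q n N i = (1 - q) • bowlM F q n N i + q • 1 := by
  refine ext_of_mulVec_single fun u => ?_
  rw [← mulVec_mulVec, add_mulVec, smul_mulVec, smul_mulVec, one_mulVec]
  rcases lt_trichotomy (u ⟨i, Nat.lt_of_succ_lt h⟩) (u ⟨i + 1, h⟩) with hlt | heq | hgt
  · have hgt' : swapTup n N i u ⟨i + 1, h⟩ < swapTup n N i u ⟨i, Nat.lt_of_succ_lt h⟩ := by
      simpa [swapTup_of_lt h] using hlt
    rw [bowlM_mulVec_single_of_le h hlt.le, bowlM_mulVec_single_of_lt h hgt',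
      swapTup_involutive]
    module
  · rw [bowlM_mulVec_single_of_le h heq.le, swapTup_of_eq h heq,
      bowlM_mulVec_single_of_le h heq.le, swapTup_of_eq h heq]
    module
  · have hle' : swapTup n N i u ⟨i, Nat.lt_of_succ_lt h⟩ ≤ swapTup n N i u ⟨i + 1, h⟩ := by
      simpa [swapTup_of_lt h] using hgt.le
    rw [bowlM_mulVec_single_of_lt h hgt, mulVec_add, mulVec_smul, mulVec_smul,
      bowlM_mulVec_single_of_le h hle', swapTup_involutive, bowlM_mulVec_single_of_lt h hgt]
    module

theorem one_sub_bowlM_mul_bowlM (h : i + 1 < n) :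
    (1 - bowlM F q n N i) * bowlM F q n N i = -q • (1 - bowlM F q n N i) := by
  rw [sub_mul, one_mul, bowlM_mul_self h]
  module

theorem one_sub_bowlM_mulVec_single_of_eq (h : i + 1 < n) {u : Fin n → Fin (N + 1)}
    (hu : u ⟨i, Nat.lt_of_succ_lt h⟩ = u ⟨i + 1, h⟩) :
    (1 - bowlM F q n N i) *ᵥ Pi.single u 1 = 0 := by
  rw [sub_mulVec, one_mulVec, bowlM_mulVec_single_of_le h hu.le, swapTup_of_eq h hu, sub_self]

end BowlingBallMatrices

section AlternatingSums

variable {F : Type*} [Field F] {q : F} {n N i : ℕ}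
  {P : Perm (Fin n) → Matrix (Fin n → Fin (N + 1)) (Fin n → Fin (N + 1)) F}

theorem apply_mul_adjSwap_of_lt (hP : ∀ w l, IsReducedWord n w l → P w = prodBowlM F q n N l)
    (h : i + 1 < n) {w : Perm (Fin n)} (hw : w ⟨i, Nat.lt_of_succ_lt h⟩ < w ⟨i + 1, h⟩) :
    P (w * adjSwap n i) = P w * bowlM F q n N i := by
  obtain ⟨l, hl⟩ := exists_isReducedWord w
  rw [hP _ _ hl, hP _ _ (hl.append_singleton h hw), prodBowlM, prodBowlM]
  simp

theorem sum_sign_smul_eq_mul_one_sub_bowlM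
    (hP : ∀ w l, IsReducedWord n w l → P w = prodBowlM F q n N l) (h : i + 1 < n)
    {W : Finset (Perm (Fin n))} (hW : ∀ w ∈ W, w * adjSwap n i ∈ W) :
    ∑ w ∈ W, ((Perm.sign w : ℤ) : F) • P w
      = (∑ w ∈ W with w ⟨i, Nat.lt_of_succ_lt h⟩ < w ⟨i + 1, h⟩,
          ((Perm.sign w : ℤ) : F) • P w) * (1 - bowlM F q n N i) := by
  have hne (w : Perm (Fin n)) : w ⟨i, Nat.lt_of_succ_lt h⟩ ≠ w ⟨i + 1, h⟩ :=
    w.injective.ne (by simp [Fin.ext_iff])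
  have hdesc : ∑ w ∈ W with ¬ w ⟨i, Nat.lt_of_succ_lt h⟩ < w ⟨i + 1, h⟩,
        ((Perm.sign w : ℤ) : F) • P w
      = ∑ w ∈ W with w ⟨i, Nat.lt_of_succ_lt h⟩ < w ⟨i + 1, h⟩,
        ((Perm.sign (w * adjSwap n i) : ℤ) : F) • P (w * adjSwap n i) := by
    refine sum_nbij' (· * adjSwap n i) (· * adjSwap n i) ?_ ?_
      (fun w _ => mul_adjSwap_mul_adjSwap w) (fun w _ => mul_adjSwap_mul_adjSwap w)
      (fun w _ => by rw [mul_adjSwap_mul_adjSwap])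
    · intro w hw
      simp only [mem_filter, mul_adjSwap_apply_left h, mul_adjSwap_apply_right h] at hw ⊢
      exact ⟨hW w hw.1, lt_of_le_of_ne (not_lt.1 hw.2) (hne w).symm⟩
    · intro w hw
      simp only [mem_filter, mul_adjSwap_apply_left h, mul_adjSwap_apply_right h] at hw ⊢
      exact ⟨hW w hw.1, hw.2.not_gt⟩
  rw [← sum_filter_add_sum_filter_not W (fun w => w ⟨i, Nat.lt_of_succ_lt h⟩ < w ⟨i + 1, h⟩),
    hdesc, sum_mul, ← sum_add_distrib]
  refine sum_congr rfl fun w hw => ?_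
  rw [apply_mul_adjSwap_of_lt hP h (mem_filter.1 hw).2, Perm.sign_mul, sign_adjSwap h,
    smul_mul_assoc, mul_sub, mul_one]
  push_cast
  module

end AlternatingSums

section Window

variable {F : Type*} [Field F] {q : F} {n N k : ℕ}

theorem exists_window_apply_succ_le (hk : k + N + 2 ≤ n) (u : Fin n → Fin (N + 1)) :
    ∃ i, ∃ h : i + 1 < n, k ≤ i ∧ i ≤ k + N ∧ u ⟨i + 1, h⟩ ≤ u ⟨i, Nat.lt_of_succ_lt h⟩ := by
  by_contra! hinc
  let g : Fin (N + 2) → Fin (N + 1) := fun j => u ⟨k + j, by omega⟩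
  have hg : StrictMono g := Fin.strictMono_iff_lt_succ.2 fun j =>
    hinc (k + j) (by omega) (by omega) (by omega)
  simpa using Fintype.card_le_of_injective g hg.injective

theorem eq_zero_of_forall_eq_mul_one_sub_bowlM (hk : k + N + 2 ≤ n)
    {A : Matrix (Fin n → Fin (N + 1)) (Fin n → Fin (N + 1)) F}
    (hA : ∀ i, k ≤ i → i ≤ k + N → ∃ B, A = B * (1 - bowlM F q n N i)) : A = 0 := by
  refine ext_of_mulVec_single fun u => ?_
  rw [zero_mulVec]
  induction hm : tupleInversions u using Nat.strong_induction_on generalizing u with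
  | _ m ih =>
  obtain ⟨i, h, hki, hik, hle⟩ := exists_window_apply_succ_le hk u
  obtain ⟨B, rfl⟩ := hA i hki hik
  rcases hle.lt_or_eq with hlt | heq
  · set u' := swapTup n N i u
    have hasc : u' ⟨i, Nat.lt_of_succ_lt h⟩ < u' ⟨i + 1, h⟩ := by
      simpa [u', swapTup_of_lt h] using hlt
    have hu : bowlM F q n N i *ᵥ Pi.single u' 1 = Pi.single u 1 := by
      rw [bowlM_mulVec_single_of_le h hasc.le, swapTup_involutive]
    have hinv : tupleInversions u' < m := by
      have := tupleInversions_swapTup h hasc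
      rw [swapTup_involutive] at this
      omega
    rw [← hu, mulVec_mulVec, mul_assoc, one_sub_bowlM_mul_bowlM h, Matrix.mul_smul, smul_mulVec,
      ih _ hinv u' rfl, smul_zero]
  · rw [← mulVec_mulVec, one_sub_bowlM_mulVec_single_of_eq h heq.symm, mulVec_zero]

end Window

-- Lanes are 0-indexed: `k + N + 2 ≤ n` is the paper's `1 ≤ k ≤ n - N - 1`.
theorem alternating_window_sum_eq_zero_general (F : Type*) [Field F] (q : F) (n N : ℕ)
    (P : Equiv.Perm (Fin n) → Matrix (Fin n → Fin (N + 1)) (Fin n → Fin (N + 1)) F)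
    (hP : ∀ w l, IsReducedWord n w l → P w = prodBowlM F q n N l)
    (k : ℕ) (hk : k + N + 2 ≤ n) :
    ∑ w ∈ Finset.univ.filter
        (fun w : Equiv.Perm (Fin n) =>
          ∀ j : Fin n, ((j : ℕ) < k ∨ k + N + 1 < (j : ℕ)) → w j = j),
      ((Equiv.Perm.sign w : ℤ) : F) • P w = 0 := by
  refine eq_zero_of_forall_eq_mul_one_sub_bowlM hk fun i hki hik =>
    ⟨_, sum_sign_smul_eq_mul_one_sub_bowlM hP (by omega) fun w hw => ?_⟩
  simp only [mem_filter, mem_univ, true_and, Perm.mul_apply] at hw ⊢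
  intro j hj
  rw [adjSwap_apply_of_ne (by omega) (by omega), hw j hj]

/-- **Theorem 3: the representation kills the alternating window sums.**
Suppose `n ≥ N + 2` and fix a window start `k` (0-indexed, so
`k + N + 2 ≤ n` corresponds to `1 ≤ k ≤ n - N - 1` in 1-indexed notation).
Let `P w` be the product of bowling-ball matrices along any reduced word of
`w` (the hypothesis `hP` pins down `P` since every permutation has a
reduced word).  Then `∑_w sgn(w)·P_w = 0`, the sum ranging over all
permutations fixing every point outside the window `{k, …, k + N + 1}`. -/
theorem alternating_window_sum_eq_zero (F : Type*) [Field F] (q : F) (n N : ℕ)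
    (hn : 2 ≤ n) (hN : 1 ≤ N)
    (P : Equiv.Perm (Fin n) → Matrix (Fin n → Fin (N + 1)) (Fin n → Fin (N + 1)) F)
    (hP : ∀ w l, IsReducedWord n w l → P w = prodBowlM F q n N l)
    (k : ℕ) (hk : k + N + 2 ≤ n) :
    ∑ w ∈ Finset.univ.filter
        (fun w : Equiv.Perm (Fin n) =>
          ∀ j : Fin n, ((j : ℕ) < k ∨ k + N + 1 < (j : ℕ)) → w j = j),
      ((Equiv.Perm.sign w : ℤ) : F) • P w = 0 :=
  alternating_window_sum_eq_zero_general F q n N P hP k hk
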